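/- arXiv:0901.0501 — 3 statements merged into one kernel-verified Lean document; each statement's English description precedes it below -/
import Mathlib

section
/- Let f be a vector of n polynomials over an idempotent semiring with Kleene sequence ks. For all k ≥ 1 and all components i (1 ≤ i ≤ n), ks(k)_i equals the (finite) combine ⨁ of the yields Y(t) over all derivation trees t of f with height h(t) ≤ k and root variable label λ_v(t) = X_i, where the combine over the empty set is 0̄. (Proposition 2.) -/
universe u v w

/-- An idempotent semiring `(D, ⊕, ⊗, 0̄, 1̄)` (Definition 1). -/
structure IdemSemiring' (D : Type u) where
  add : D → D → D
  mul : D → D → D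
  zero : D
  one : D
  add_assoc : ∀ a b c, add (add a b) c = add a (add b c)
  add_comm : ∀ a b, add a b = add b a
  add_zero : ∀ a, add a zero = a
  mul_assoc : ∀ a b c, mul (mul a b) c = mul a (mul b c)
  one_mul : ∀ a, mul one a = a
  mul_one : ∀ a, mul a one = a
  mul_add : ∀ a b c, mul a (add b c) = add (mul a b) (mul a c)
  add_mul : ∀ a b c, mul (add a b) c = add (mul a c) (mul b c)
  mul_zero : ∀ a, mul a zero = zero
  zero_mul : ∀ a, mul zero a = zero
  add_idem : ∀ a, add a a = a

/-- The natural order: `a ⊑ b` iff `a ⊕ b = a` (Definition 2). -/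
def IdemSemiring'.le {D : Type u} (S : IdemSemiring' D) (a b : D) : Prop :=
  S.add a b = a

/-- Extend preserves inequality: `a ≠ b → a ⊗ c ≠ b ⊗ c` for `a, b, c ≠ 0̄` (Definition 3). -/
def PreservesIneq {D : Type u} (S : IdemSemiring' D) : Prop :=
  ∀ a b c : D, a ≠ S.zero → b ≠ S.zero → c ≠ S.zero → a ≠ b → S.mul a c ≠ S.mul b c

/-- Combine `⨁` of a list of semiring elements (`0̄` for the empty list). -/
def combineList {D : Type u} (S : IdemSemiring' D) (l : List D) : D :=
  l.foldr S.add S.zero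

/-- Extend `⨂` of a list of semiring elements (`1̄` for the empty list). -/
def prodList {D : Type u} (S : IdemSemiring' D) (l : List D) : D :=
  l.foldr S.mul S.one

/-- A monomial `a₁ X_{i₁} a₂ ⋯ a_s X_{i_s} a_{s+1}`, given by the list of pairs
`(a_j, i_j)` together with the final coefficient `a_{s+1}`. -/
structure Mono (D : Type u) (n : ℕ) where
  pairs : List (D × Fin n)
  last : D

/-- Value `a₁ ⊗ v_{i₁} ⊗ a₂ ⊗ ⋯ ⊗ v_{i_s} ⊗ a_{s+1}` of a monomial at a vector `v`. -/
def Mono.eval {D : Type u} {n : ℕ} (S : IdemSemiring' D) (m : Mono D n) (v : Fin n → D) : D :=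
  m.pairs.foldr (fun p acc => S.mul p.1 (S.mul (v p.2) acc)) m.last

/-- A polynomial is a finite combine `m₁ ⊕ ⋯ ⊕ m_s` of monomials. -/
abbrev SPoly (D : Type u) (n : ℕ) := List (Mono D n)

/-- Value `m₁(v) ⊕ ⋯ ⊕ m_s(v)` of a polynomial at a vector `v`. -/
def SPoly.eval {D : Type u} {n : ℕ} (S : IdemSemiring' D) (f : SPoly D n) (v : Fin n → D) : D :=
  f.foldr (fun m acc => S.add (Mono.eval S m v) acc) S.zero

/-- A vector of polynomials `f = (f₁, …, f_n)`. -/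
abbrev PolyVec (D : Type u) (n : ℕ) := Fin n → SPoly D n

/-- The map `D^n → D^n` induced by a vector of polynomials. -/
def applyPV {D : Type u} {n : ℕ} (S : IdemSemiring' D) (f : PolyVec D n) (v : Fin n → D) :
    Fin n → D :=
  fun i => SPoly.eval S (f i) v

/-- The Kleene sequence of `f` : `ks(0) = (0̄, …, 0̄)`, `ks(k+1) = f(ks(k))`. -/
def kleene {D : Type u} {n : ℕ} (S : IdemSemiring' D) (f : PolyVec D n) : ℕ → Fin n → D
  | 0 => fun _ => S.zero
  | k + 1 => applyPV S f (kleene S f k)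

/-- The componentwise order `⊑` on vectors. -/
def vle {D : Type u} {n : ℕ} (S : IdemSemiring' D) (u v : Fin n → D) : Prop :=
  ∀ i, S.le (u i) (v i)

/-- `g` is the greatest fixed point of the map induced by `f`. -/
def isGFP {D : Type u} {n : ℕ} (S : IdemSemiring' D) (f : PolyVec D n) (g : Fin n → D) : Prop :=
  applyPV S f g = g ∧ ∀ v, applyPV S f v = v → vle S v g

/-- Derivation trees of a vector of polynomials (Definition 6): each node is labelled
with a variable and a monomial. -/
inductive DTree (D : Type u) (n : ℕ) : Type u where
  | node : Fin n → Mono D n → List (DTree D n) → DTree D n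

/-- The variable label `λ_v` of the root. -/
def DTree.rootVar {D : Type u} {n : ℕ} : DTree D n → Fin n
  | .node i _ _ => i

/-- Well-formedness of a derivation tree with respect to `f` : every node labelled
`(X_i, m)` has `m` a monomial of `f_i`, and one child per variable occurrence of `m`,
the `j`-th child's root being labelled with the `j`-th variable of `m`. -/
inductive DTree.wf {D : Type u} {n : ℕ} (f : PolyVec D n) : DTree D n → Prop
  | node (i : Fin n) (m : Mono D n) (ts : List (DTree D n))
      (hm : m ∈ f i)
      (hlen : ts.length = m.pairs.length)
      (hvar : ∀ (j : ℕ) (hj : j < ts.length) (hj' : j < m.pairs.length),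
        (ts.get ⟨j, hj⟩).rootVar = (m.pairs.get ⟨j, hj'⟩).2)
      (hts : ∀ t ∈ ts, DTree.wf f t) :
      DTree.wf f (.node i m ts)

/-- Height of a derivation tree: the number of nodes on a longest root-to-leaf path. -/
def DTree.height {D : Type u} {n : ℕ} : DTree D n → ℕ
  | .node _ _ ts => 1 + ts.attach.foldr (fun t acc => max (DTree.height t.1) acc) 0
decreasing_by
  simp only [DTree.node.sizeOf_spec]
  have := List.sizeOf_lt_of_mem t.2
  omega

/-- Yield of a derivation tree: `Y(t) = a₁ ⊗ Y(t₁) ⊗ a₂ ⊗ ⋯ ⊗ Y(t_s) ⊗ a_{s+1}`. -/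
def DTree.yield {D : Type u} {n : ℕ} (S : IdemSemiring' D) : DTree D n → D
  | .node _ m ts =>
      (m.pairs.zip ts.attach).foldr
        (fun pt acc => S.mul pt.1.1 (S.mul (DTree.yield S pt.2.1) acc)) m.last
decreasing_by
  simp only [DTree.node.sizeOf_spec]
  have := List.sizeOf_lt_of_mem pt.2.2
  omega

/-!
Induction on `k`. If `ks(k)_j` is the combine of the yields of the trees of height `≤ k`
rooted at `X_j`, then distributivity expands each monomial
`a₁ ks(k)_{i₁} a₂ ⋯ ks(k)_{i_s} a_{s+1}` of `f_i` into the combine, over all choices of one such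
tree per variable occurrence, of `a₁ Y(t₁) a₂ ⋯ Y(t_s) a_{s+1}`. These choices are exactly the
lists of children of the trees of height `≤ k + 1` rooted at `X_i` and labelled with that
monomial, and the combined terms are their yields. Idempotence makes the combine insensitive
to repetitions in this enumeration.
-/

section

variable {D : Type u} {n : ℕ}

section Combine

variable (S : IdemSemiring' D)

@[simp]
lemma combineList_nil : combineList S [] = S.zero := rfl

@[simp]
lemma combineList_cons (a : D) (l : List D) :
    combineList S (a :: l) = S.add a (combineList S l) := rfl

lemma combineList_append (l₁ l₂ : List D) :
    combineList S (l₁ ++ l₂) = S.add (combineList S l₁) (combineList S l₂) := by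
  induction l₁ with
  | nil => rw [List.nil_append, combineList_nil, S.add_comm, S.add_zero]
  | cons a l ih => rw [List.cons_append, combineList_cons, combineList_cons, ih, S.add_assoc]

lemma combineList_flatMap {α : Type v} (l : List α) (g : α → List D) :
    combineList S (l.flatMap g) = combineList S (l.map fun x => combineList S (g x)) := by
  induction l with
  | nil => rfl
  | cons a l ih => rw [List.flatMap_cons, List.map_cons, combineList_append, combineList_cons, ih]

lemma mul_combineList (a : D) (l : List D) :
    S.mul a (combineList S l) = combineList S (l.map (S.mul a)) := by
  induction l with
  | nil => exact S.mul_zero a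
  | cons b l ih => rw [List.map_cons, combineList_cons, combineList_cons, S.mul_add, ih]

lemma combineList_mul (l : List D) (a : D) :
    S.mul (combineList S l) a = combineList S (l.map fun x => S.mul x a) := by
  induction l with
  | nil => exact S.zero_mul a
  | cons b l ih => rw [List.map_cons, combineList_cons, combineList_cons, S.add_mul, ih]

lemma add_combineList_of_mem {a : D} {l : List D} (h : a ∈ l) :
    S.add a (combineList S l) = combineList S l := by
  induction l with
  | nil => cases h
  | cons b l ih =>
    rw [combineList_cons, ← S.add_assoc]
    rcases List.mem_cons.1 h with rfl | h
    · rw [S.add_idem]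
    · rw [S.add_comm a, S.add_assoc, ih h]

lemma combineList_map_dedup {α : Type v} [DecidableEq α] (g : α → D) (l : List α) :
    combineList S (l.dedup.map g) = combineList S (l.map g) := by
  induction l with
  | nil => rfl
  | cons a l ih =>
    by_cases ha : a ∈ l
    · rw [List.dedup_cons_of_mem ha, ih, List.map_cons, combineList_cons,
        add_combineList_of_mem S (List.mem_map_of_mem ha)]
    · rw [List.dedup_cons_of_notMem ha, List.map_cons, List.map_cons, combineList_cons,
        combineList_cons, ih]

/-- A product of combines is the combine, over all ways of choosing one term from each factor,
of the corresponding products. -/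
lemma foldr_mul_combineList_eq_sections {ι : Type v} {α : Type w} (L : ι → List α) (y : α → D)
    (ps : List (D × ι)) (c : D) :
    ps.foldr (fun p acc => S.mul p.1 (S.mul (combineList S ((L p.2).map y)) acc)) c =
      combineList S ((List.sections (ps.map fun p => L p.2)).map fun ts =>
        (ps.zip ts).foldr (fun pt acc => S.mul pt.1.1 (S.mul (y pt.2) acc)) c) := by
  induction ps with
  | nil => exact (S.add_zero c).symm
  | cons p ps ih =>
    rw [List.foldr_cons, ih, mul_combineList, mul_combineList, List.map_map, List.map_map,
      List.map_cons, List.sections, List.map_flatMap, combineList_flatMap]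
    congr 1
    refine List.map_congr_left fun ts _ => ?_
    simp only [Function.comp_apply]
    rw [combineList_mul, mul_combineList, List.map_map, List.map_map, List.map_map]
    rfl

end Combine

namespace DTree

lemma height_node (i : Fin n) (m : Mono D n) (ts : List (DTree D n)) :
    (node i m ts).height = 1 + ts.foldr (fun t acc => max t.height acc) 0 := by
  rw [height]
  exact congrArg (1 + ·) (List.foldr_attach (f := fun (t : DTree D n) acc => max t.height acc))

lemma one_le_height (t : DTree D n) : 1 ≤ t.height := by
  cases t
  rw [height_node]
  omega

lemma height_node_le_succ_iff (i : Fin n) (m : Mono D n) (ts : List (DTree D n)) (k : ℕ) :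
    (node i m ts).height ≤ k + 1 ↔ ∀ t ∈ ts, t.height ≤ k := by
  rw [height_node, Nat.add_comm, Nat.add_le_add_iff_right]
  induction ts with
  | nil => simp
  | cons a l ih => simp [ih]

lemma yield_node (S : IdemSemiring' D) (i : Fin n) (m : Mono D n) (ts : List (DTree D n)) :
    (node i m ts).yield S =
      (m.pairs.zip ts).foldr (fun pt acc => S.mul pt.1.1 (S.mul (pt.2.yield S) acc)) m.last := by
  rw [yield]
  conv_rhs => rw [← List.attach_map_subtype_val ts, List.zip_map_right, List.foldr_map]
  rfl

lemma wf_node_iff (f : PolyVec D n) (i : Fin n) (m : Mono D n) (ts : List (DTree D n)) :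
    (node i m ts).wf f ↔
      m ∈ f i ∧ List.Forall₂ (fun t p => t.rootVar = p.2) ts m.pairs ∧ ∀ t ∈ ts, t.wf f := by
  rw [List.forall₂_iff_get]
  constructor
  · rintro ⟨_, _, _, hm, hlen, hvar, hts⟩
    exact ⟨hm, ⟨hlen, hvar⟩, hts⟩
  · rintro ⟨hm, ⟨hlen, hvar⟩, hts⟩
    exact .node i m ts hm hlen hvar hts

end DTree

-- May contain repetitions, e.g. when some `f j` lists a monomial twice.
def treesUpTo (f : PolyVec D n) : ℕ → Fin n → List (DTree D n)
  | 0, _ => []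
  | k + 1, i => (f i).flatMap fun m =>
      (List.sections (m.pairs.map fun p => treesUpTo f k p.2)).map (.node i m)

lemma mem_treesUpTo (f : PolyVec D n) (k : ℕ) (t : DTree D n) (i : Fin n) :
    t ∈ treesUpTo f k i ↔ t.wf f ∧ t.height ≤ k ∧ t.rootVar = i := by
  induction k generalizing t i with
  | zero =>
    simp only [treesUpTo, List.not_mem_nil, false_iff]
    exact fun ⟨_, h, _⟩ => absurd (t.one_le_height.trans h) (by omega)
  | succ k ih =>
    obtain ⟨i', m, ts⟩ := t
    have hchildren : ts ∈ List.sections (m.pairs.map fun p => treesUpTo f k p.2) ↔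
        (∀ t ∈ ts, t.wf f) ∧ (∀ t ∈ ts, t.height ≤ k) ∧
          List.Forall₂ (fun t p => t.rootVar = p.2) ts m.pairs := by
      simp only [List.mem_sections, List.forall₂_map_right_iff, ih, List.forall₂_and_left]
    simp only [treesUpTo, List.mem_flatMap, List.mem_map, DTree.node.injEq, DTree.wf_node_iff,
      DTree.height_node_le_succ_iff, DTree.rootVar]
    constructor
    · rintro ⟨m, hm, ts, hts, rfl, rfl, rfl⟩
      obtain ⟨hwf, hh, hvar⟩ := hchildren.1 hts
      exact ⟨⟨hm, hvar, hwf⟩, hh, rfl⟩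
    · rintro ⟨⟨hm, hvar, hwf⟩, hh, rfl⟩
      exact ⟨m, hm, ts, hchildren.2 ⟨hwf, hh, hvar⟩, rfl, rfl, rfl⟩

lemma kleene_eq_combineList_treesUpTo (S : IdemSemiring' D) (f : PolyVec D n) (k : ℕ)
    (i : Fin n) :
    kleene S f k i = combineList S ((treesUpTo f k i).map (DTree.yield S)) := by
  induction k generalizing i with
  | zero => rfl
  | succ k ih =>
    have hmono : ∀ m : Mono D n, m.eval S (kleene S f k) =
        combineList S ((List.sections (m.pairs.map fun p => treesUpTo f k p.2)).map
          fun ts => (DTree.node i m ts).yield S) := by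
      intro m
      simp only [Mono.eval, ih, DTree.yield_node]
      exact foldr_mul_combineList_eq_sections S _ _ m.pairs m.last
    calc kleene S f (k + 1) i
        = combineList S ((f i).map fun m => m.eval S (kleene S f k)) := by
          rw [kleene, applyPV, SPoly.eval, combineList, List.foldr_map]
      _ = combineList S ((treesUpTo f (k + 1) i).map (DTree.yield S)) := by
          simp only [hmono, treesUpTo, List.map_flatMap, combineList_flatMap, List.map_map]
          rfl

end

theorem kleene_eq_combine_yields_general {D : Type u} {n : ℕ} (S : IdemSemiring' D)
    (f : PolyVec D n) (k : ℕ) (i : Fin n) :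
    ∃ l : List (DTree D n), l.Nodup ∧
      (∀ t : DTree D n, t ∈ l ↔ (DTree.wf f t ∧ DTree.height t ≤ k ∧ DTree.rootVar t = i)) ∧
      kleene S f k i = combineList S (l.map (DTree.yield S)) := by
  classical
  refine ⟨(treesUpTo f k i).dedup, List.nodup_dedup _, fun t => ?_, ?_⟩
  · rw [List.mem_dedup, mem_treesUpTo]
  · rw [combineList_map_dedup, kleene_eq_combineList_treesUpTo]

/-- Proposition 2: for `k ≥ 1`, `ks(k)ᵢ` is the combine of the yields of all derivation
trees of `f` of height at most `k` whose root is labelled with the variable `Xᵢ`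
(the combine over the empty set being `0̄`). -/
theorem kleene_eq_combine_yields {D : Type u} {n : ℕ} (S : IdemSemiring' D)
    (f : PolyVec D n) (k : ℕ) (hk : 1 ≤ k) (i : Fin n) :
    ∃ l : List (DTree D n), l.Nodup ∧
      (∀ t : DTree D n, t ∈ l ↔ (DTree.wf f t ∧ DTree.height t ≤ k ∧ DTree.rootVar t = i)) ∧
      kleene S f k i = combineList S (l.map (DTree.yield S)) :=
  kleene_eq_combine_yields_general S f k i
end

section
/- Let f be a vector of n polynomials over the integer min-plus semiring S_int = (ℤ ∪ {∞}, min, +, ∞, 0), with Kleene sequence ks. Then f has a greatest fixed point if and only if ks(n) = ks(n+1); and in that case ks(n) is the greatest fixed point of f. (Corollary 1.) -/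
universe u v w

/-- The integer min-plus semiring `S_int = (ℤ ∪ {∞}, min, +, ∞, 0)` of Example 1. -/
def Sint : IdemSemiring' (WithTop ℤ) where
  add := min
  mul := (· + ·)
  zero := ⊤
  one := 0
  add_assoc := fun a b c => min_assoc a b c
  add_comm := fun a b => min_comm a b
  add_zero := fun a => min_eq_left le_top
  mul_assoc := fun a b c => add_assoc a b c
  one_mul := fun a => zero_add a
  mul_one := fun a => add_zero a
  mul_add := fun a b c => by
    rcases le_total b c with h | h
    · rw [min_eq_left h, min_eq_left (add_le_add_right h a)]
    · rw [min_eq_right h, min_eq_right (add_le_add_right h a)]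
  add_mul := fun a b c => by
    rcases le_total a b with h | h
    · rw [min_eq_left h, min_eq_left (add_le_add_left h c)]
    · rw [min_eq_right h, min_eq_right (add_le_add_left h c)]
  mul_zero := fun a => by simp
  zero_mul := fun a => by simp
  add_idem := fun a => min_self a

/-!
Over `S_int`, the `k`-th Kleene iterate `ks(k)_i` is the least weight of a derivation tree of
height at most `k` rooted at `X_i`, and every fixed point lies below the weight of every
derivation tree. If a tree beats `ks(n)_i`, it is taller than `n`, so some path repeats a
variable and the tree contains a cycle. A cycle of nonnegative weight can be cut out, which
shrinks the tree without increasing its weight; a cycle of negative weight can be pumped into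
trees of arbitrarily small weight, which no fixed point can lie below.
-/

section

variable {n : ℕ} {f : PolyVec (WithTop ℤ) n}

lemma List.exists_map_eq_of_forall_exists {α β : Type*} {g : β → α} {P : β → Prop} :
    ∀ {l : List α}, (∀ a ∈ l, ∃ b, g b = a ∧ P b) → ∃ l' : List β, l'.map g = l ∧ ∀ b ∈ l', P b
  | [], _ => ⟨[], rfl, by simp⟩
  | a :: l, h => by
    obtain ⟨b, rfl, hb⟩ := h a List.mem_cons_self
    obtain ⟨l', rfl, hl'⟩ :=
      List.exists_map_eq_of_forall_exists fun a ha => h a (List.mem_cons_of_mem _ ha)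
    exact ⟨b :: l', rfl, by simpa using ⟨hb, hl'⟩⟩

lemma List.ne_top_of_mem_of_sum_ne_top {α : Type*} [AddMonoid α] {l : List (WithTop α)}
    {a : WithTop α} (h : l.sum ≠ ⊤) (ha : a ∈ l) : a ≠ ⊤ := by
  induction l with
  | nil => simp at ha
  | cons b l ih =>
    rw [List.sum_cons, WithTop.add_ne_top] at h
    rcases List.mem_cons.1 ha with rfl | ha
    exacts [h.1, ih h.2 ha]

lemma sint_le_iff {a b : WithTop ℤ} : Sint.le a b ↔ a ≤ b := by
  simp [IdemSemiring'.le, Sint]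

def Mono.coeffSum (m : Mono (WithTop ℤ) n) : WithTop ℤ :=
  (m.pairs.map Prod.fst).sum + m.last

lemma Mono.eval_sint (m : Mono (WithTop ℤ) n) (v : Fin n → WithTop ℤ) :
    Mono.eval Sint m v = m.coeffSum + (m.pairs.map (v ∘ Prod.snd)).sum := by
  obtain ⟨ps, c⟩ := m
  simp only [Mono.eval, Mono.coeffSum]
  induction ps with
  | nil => simp
  | cons p ps ih =>
    simp only [List.foldr_cons, List.map_cons, List.sum_cons, Function.comp_apply, ih]
    change p.1 + (v p.2 + _) = _
    abel

lemma SPoly.eval_sint_le {F : SPoly (WithTop ℤ) n} {m : Mono (WithTop ℤ) n} (hm : m ∈ F)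
    (v : Fin n → WithTop ℤ) : SPoly.eval Sint F v ≤ Mono.eval Sint m v := by
  have : SPoly.eval Sint F v = (F.map (Mono.eval Sint · v)).foldr min ⊤ := by
    rw [List.foldr_map]; rfl
  exact this ▸ List.min_le_of_le (List.mem_map_of_mem hm) le_rfl

lemma SPoly.exists_eval_sint_eq {F : SPoly (WithTop ℤ) n} {v : Fin n → WithTop ℤ}
    (h : SPoly.eval Sint F v ≠ ⊤) : ∃ m ∈ F, SPoly.eval Sint F v = Mono.eval Sint m v := by
  induction F with
  | nil => exact absurd rfl h
  | cons m F ih =>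
    change min (Mono.eval Sint m v) (SPoly.eval Sint F v) ≠ ⊤ at h
    change ∃ m' ∈ m :: F, min (Mono.eval Sint m v) (SPoly.eval Sint F v) = _
    rcases min_choice (Mono.eval Sint m v) (SPoly.eval Sint F v) with hmin | hmin <;>
      rw [hmin] at h ⊢
    · exact ⟨m, List.mem_cons_self, rfl⟩
    · obtain ⟨m', hm', heq⟩ := ih h
      exact ⟨m', List.mem_cons_of_mem _ hm', heq⟩

inductive DerivTree (n : ℕ) : Type
  | node (i : Fin n) (m : Mono (WithTop ℤ) n) (cs : List (DerivTree n))

namespace DerivTree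

def root : DerivTree n → Fin n
  | node i _ _ => i

def total {M : Type*} [AddCommMonoid M] (φ : Mono (WithTop ℤ) n → M) : DerivTree n → M
  | node _ m cs => φ m + (cs.map (total φ)).sum

abbrev weight : DerivTree n → WithTop ℤ := total Mono.coeffSum

abbrev size : DerivTree n → ℕ := total fun _ => 1

lemma weight_node (i : Fin n) (m : Mono (WithTop ℤ) n) (cs : List (DerivTree n)) :
    (node i m cs).weight = m.coeffSum + (cs.map weight).sum := by
  simp [total]

lemma size_node (i : Fin n) (m : Mono (WithTop ℤ) n) (cs : List (DerivTree n)) :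
    (node i m cs).size = 1 + (cs.map size).sum := by
  simp [total]

lemma size_lt_of_mem {i : Fin n} {m : Mono (WithTop ℤ) n} {cs : List (DerivTree n)}
    {c : DerivTree n} (hc : c ∈ cs) : c.size < (node i m cs).size := by
  rw [size_node]
  have := List.le_sum_of_mem (List.mem_map_of_mem (f := size) hc)
  omega

inductive Valid (f : PolyVec (WithTop ℤ) n) : DerivTree n → Prop
  | node {i : Fin n} {m : Mono (WithTop ℤ) n} {cs : List (DerivTree n)} (hm : m ∈ f i)
      (hroots : cs.map root = m.pairs.map Prod.snd) (hcs : ∀ c ∈ cs, Valid f c) :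
      Valid f (node i m cs)

def HeightLE : ℕ → DerivTree n → Prop
  | 0, _ => False
  | k + 1, node _ _ cs => ∀ c ∈ cs, HeightLE k c

lemma HeightLE.succ : ∀ {k : ℕ} {t : DerivTree n}, HeightLE k t → HeightLE (k + 1) t
  | _ + 1, node _ _ _, h => fun c hc => (h c hc).succ

/-- `Graft t s x y`: `y` arises from `t` by replacing one occurrence of the subtree `s` by `x`. -/
inductive Graft : DerivTree n → DerivTree n → DerivTree n → DerivTree n → Prop
  | here (s x : DerivTree n) : Graft s s x x
  | child (i : Fin n) (m : Mono (WithTop ℤ) n) (pre post : List (DerivTree n))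
      {c s x y : DerivTree n} :
      Graft c s x y → Graft (node i m (pre ++ c :: post)) s x (node i m (pre ++ y :: post))

namespace Graft

variable {t s x y : DerivTree n}

lemma exists_graft (h : Graft t s x y) (x' : DerivTree n) : ∃ y', Graft t s x' y' := by
  induction h with
  | here s x => exact ⟨x', here s x'⟩
  | child i m pre post _ ih =>
    obtain ⟨y', hy'⟩ := ih
    exact ⟨_, child i m pre post hy'⟩

/-- The additive measure of the context around the grafted subtree does not depend on it. -/
lemma exists_total_eq {M : Type*} [AddCommMonoid M] (φ : Mono (WithTop ℤ) n → M)
    (h : Graft t s x y) : ∃ c, total φ t = c + total φ s ∧ total φ y = c + total φ x := by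
  induction h with
  | here s x => exact ⟨0, by simp, by simp⟩
  | child i m pre post _ ih =>
    obtain ⟨c, hc, hy⟩ := ih
    refine ⟨φ m + (pre.map (total φ)).sum + c + (post.map (total φ)).sum, ?_, ?_⟩ <;>
      simp only [total, List.map_append, List.map_cons, List.sum_append, List.sum_cons, hc,
        hy] <;> abel

lemma root_eq (h : Graft t s x y) (hx : x.root = s.root) : y.root = t.root := by
  cases h with
  | here => exact hx
  | child => rfl

lemma valid_left (h : Graft t s x y) (ht : Valid f t) :
    Valid f s := by
  induction h with
  | here => exact ht
  | child i m pre post _ ih =>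
    cases ht with
    | node _ _ hcs => exact ih (hcs _ (by simp))

lemma valid (h : Graft t s x y) (ht : Valid f t) (hx : Valid f x)
    (hxs : x.root = s.root) : Valid f y := by
  induction h with
  | here => exact hx
  | child i m pre post hg ih =>
    cases ht with
    | node hm hroots hcs =>
      refine .node hm ?_ ?_
      · simpa [hg.root_eq hxs] using hroots
      · intro c hc
        simp only [List.mem_append, List.mem_cons] at hc
        rcases hc with hc | rfl | hc
        · exact hcs c (by simp [hc])
        · exact ih (hcs _ (by simp)) hx hxs
        · exact hcs c (by simp [hc])

lemma size_le (h : Graft t s x y) : s.size ≤ t.size := by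
  obtain ⟨c, hc : t.size = c + s.size, -⟩ := h.exists_total_eq fun _ => 1
  omega

end Graft

def HasCycle (t : DerivTree n) : Prop :=
  ∃ s s', Graft t s s t ∧ Graft s s' s' s ∧ s'.size < s.size ∧ s'.root = s.root

lemma heightLE_card_of_not_hasCycle {A : Finset (Fin n)} {t : DerivTree n}
    (hA : ∀ s, Graft t s s t → s.root ∈ A) (ht : ¬ t.HasCycle) : HeightLE A.card t := by
  induction hk : A.card generalizing A t with
  | zero =>
    rw [Finset.card_eq_zero] at hk
    simpa [hk] using hA t (.here t t)
  | succ k ih =>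
    obtain ⟨i, m, cs⟩ := t
    have hi : i ∈ A := hA _ (.here _ _)
    intro c hc
    obtain ⟨pre, post, rfl⟩ := List.append_of_mem hc
    refine ih (A := A.erase i) (fun s hs => Finset.mem_erase.2 ⟨fun hsi => ?_, ?_⟩) ?_ ?_
    · exact ht ⟨_, s, .here _ _, .child i m pre post hs,
        hs.size_le.trans_lt (size_lt_of_mem hc), hsi⟩
    · exact hA s (.child i m pre post hs)
    · rintro ⟨s, s', h, hcyc⟩
      exact ht ⟨s, s', .child i m pre post h, hcyc⟩
    · rw [Finset.card_erase_of_mem hi, hk, Nat.add_sub_cancel]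

lemma eval_le_weight_node {i : Fin n} {m : Mono (WithTop ℤ) n} {cs : List (DerivTree n)}
    {v : Fin n → WithTop ℤ} (hm : m ∈ f i) (hroots : cs.map root = m.pairs.map Prod.snd)
    (hcs : ∀ c ∈ cs, v c.root ≤ c.weight) :
    SPoly.eval Sint (f i) v ≤ (node i m cs).weight :=
  calc SPoly.eval Sint (f i) v ≤ Mono.eval Sint m v := SPoly.eval_sint_le hm v
    _ = m.coeffSum + (cs.map (v ∘ root)).sum := by
      rw [Mono.eval_sint, ← List.map_map, ← hroots, List.map_map]
    _ ≤ (node i m cs).weight := by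
      rw [weight_node]
      exact add_le_add_right (List.sum_le_sum hcs) _

lemma kleene_le_weight {t : DerivTree n} (ht : Valid f t) {k : ℕ} (hk : HeightLE k t) :
    kleene Sint f k t.root ≤ t.weight := by
  induction ht generalizing k with
  | node hm hroots _ ih =>
    cases k with
    | zero => exact hk.elim
    | succ k => exact eval_le_weight_node hm hroots fun c hc => ih c hc (hk c hc)

lemma exists_valid_weight_le_kleene {k : ℕ} {i : Fin n} (h : kleene Sint f k i ≠ ⊤) :
    ∃ t, t.root = i ∧ Valid f t ∧ HeightLE k t ∧ t.weight ≤ kleene Sint f k i := by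
  induction k generalizing i with
  | zero => exact absurd rfl h
  | succ k ih =>
    change SPoly.eval Sint (f i) (kleene Sint f k) ≠ ⊤ at h
    change ∃ t : DerivTree n, _ ∧ _ ∧ _ ∧ t.weight ≤ SPoly.eval Sint (f i) (kleene Sint f k)
    obtain ⟨m, hm, heq⟩ := SPoly.exists_eval_sint_eq h
    rw [heq, Mono.eval_sint] at h ⊢
    obtain ⟨cs, hroots, hcs⟩ := List.exists_map_eq_of_forall_exists
      (P := fun t => Valid f t ∧ HeightLE k t ∧ t.weight ≤ kleene Sint f k t.root)
      fun j hj => by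
        have hj : kleene Sint f k j ≠ ⊤ :=
          List.ne_top_of_mem_of_sum_ne_top (WithTop.add_ne_top.1 h).2
            (by rw [← List.map_map]; exact List.mem_map_of_mem hj)
        obtain ⟨t, rfl, ht⟩ := ih hj
        exact ⟨t, rfl, ht⟩
    refine ⟨node i m cs, rfl, .node hm hroots fun c hc => (hcs c hc).1,
      fun c hc => (hcs c hc).2.1, ?_⟩
    rw [weight_node, ← List.map_map, ← hroots, List.map_map]
    exact add_le_add_right (List.sum_le_sum fun c hc => (hcs c hc).2.2) _

lemma le_weight_of_isFixedPt {g : Fin n → WithTop ℤ} (hg : applyPV Sint f g = g)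
    {t : DerivTree n} (ht : Valid f t) : g t.root ≤ t.weight := by
  induction ht with
  | @node i m cs hm hroots _ ih =>
    calc g i = applyPV Sint f g i := by rw [hg]
      _ ≤ _ := eval_le_weight_node hm hroots ih

lemma exists_valid_weight_le_of_negative_cycle {s s' : DerivTree n} (h : Graft s s' s' s)
    (hs : Valid f s) (hroot : s'.root = s.root) (hlt : s.weight < s'.weight) (b : ℤ) :
    ∃ t, t.root = s.root ∧ Valid f t ∧ t.weight ≤ b := by
  obtain ⟨c, hc : s.weight = c + s'.weight, -⟩ := h.exists_total_eq Mono.coeffSum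
  have hs' : s'.weight ≠ ⊤ := (WithTop.add_ne_top.1 (hc ▸ hlt.ne_top)).2
  have hpump : ∀ k : ℕ, ∃ t, t.root = s.root ∧ Valid f t ∧ t.weight = k • c + s.weight := by
    intro k
    induction k with
    | zero => exact ⟨s, rfl, hs, by simp⟩
    | succ k ih =>
      obtain ⟨t, hroot_t, ht, hwt⟩ := ih
      obtain ⟨y, hy⟩ := h.exists_graft t
      obtain ⟨c', hc', hy_wt : y.weight = c' + t.weight⟩ := hy.exists_total_eq Mono.coeffSum
      have hcc' : c' = c := WithTop.add_right_cancel hs' (hc'.symm.trans hc)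
      refine ⟨y, hy.root_eq (hroot_t.trans hroot.symm), hy.valid hs ht
        (hroot_t.trans hroot.symm), ?_⟩
      rw [hy_wt, hwt, hcc', succ_nsmul', add_assoc]
  obtain ⟨a, ha⟩ := WithTop.ne_top_iff_exists.1 hlt.ne_top
  obtain ⟨γ, rfl⟩ := WithTop.ne_top_iff_exists.1 (WithTop.add_ne_top.1 (hc ▸ hlt.ne_top)).1
  have hγ : γ < 0 := by
    obtain ⟨β, hβ⟩ := WithTop.ne_top_iff_exists.1 hs'
    rw [← ha, ← hβ, ← WithTop.coe_add, WithTop.coe_eq_coe] at hc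
    rw [← ha, ← hβ, WithTop.coe_lt_coe] at hlt
    omega
  obtain ⟨t, hroot_t, ht, hwt⟩ := hpump (a - b).toNat
  refine ⟨t, hroot_t, ht, ?_⟩
  rw [hwt, ← ha, ← WithTop.coe_nsmul, ← WithTop.coe_add, WithTop.coe_le_coe, nsmul_eq_mul]
  nlinarith [Int.self_le_toNat (a - b), Int.natCast_nonneg (a - b).toNat]

lemma exists_heightLE_weight_le_of_isFixedPt {g : Fin n → WithTop ℤ} (hg : applyPV Sint f g = g)
    {t : DerivTree n} (ht : Valid f t) (hw : t.weight ≠ ⊤) :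
    ∃ u, u.root = t.root ∧ Valid f u ∧ HeightLE n u ∧ u.weight ≤ t.weight := by
  induction hN : t.size using Nat.strong_induction_on generalizing t with
  | _ N ih =>
  by_cases hcyc : t.HasCycle
  · obtain ⟨s, s', h, hs's, hsize, hroot⟩ := hcyc
    have hs : Valid f s := h.valid_left ht
    rcases le_or_gt s'.weight s.weight with hle | hlt
    · obtain ⟨t', ht'⟩ := h.exists_graft s'
      obtain ⟨c, hct : t.weight = c + s.weight, hct' : t'.weight = c + s'.weight⟩ :=
        ht'.exists_total_eq Mono.coeffSum
      obtain ⟨d, hdt : t.size = d + s.size, hdt' : t'.size = d + s'.size⟩ :=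
        ht'.exists_total_eq fun _ => 1
      have hwt : t'.weight ≤ t.weight := by
        rw [hct, hct']
        gcongr
      obtain ⟨u, hroot_u, hu, hu_ht, hu_wt⟩ := ih t'.size (by omega)
        (ht'.valid ht (hs's.valid_left hs) hroot) (ne_top_of_le_ne_top hw hwt) rfl
      exact ⟨u, hroot_u.trans (ht'.root_eq hroot), hu, hu_ht, hu_wt.trans hwt⟩
    · exfalso
      obtain ⟨a, ha⟩ := WithTop.ne_top_iff_exists.1
        (ne_top_of_le_ne_top hlt.ne_top (le_weight_of_isFixedPt hg hs))
      obtain ⟨u, hroot_u, hu, hwu⟩ :=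
        exists_valid_weight_le_of_negative_cycle hs's hs hroot hlt (a - 1)
      have := (le_weight_of_isFixedPt hg hu).trans hwu
      rw [hroot_u, ← ha, WithTop.coe_le_coe] at this
      omega
  · refine ⟨t, rfl, ht, ?_, le_rfl⟩
    simpa using heightLE_card_of_not_hasCycle (A := Finset.univ) (by simp) hcyc

end DerivTree

open DerivTree

lemma kleene_succ_le (k : ℕ) (i : Fin n) : kleene Sint f (k + 1) i ≤ kleene Sint f k i := by
  by_cases h : kleene Sint f k i = ⊤
  · exact h ▸ le_top
  obtain ⟨t, rfl, ht, hk, hwt⟩ := exists_valid_weight_le_kleene h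
  exact (kleene_le_weight ht hk.succ).trans hwt

lemma le_kleene_of_isFixedPt {g : Fin n → WithTop ℤ} (hg : applyPV Sint f g = g) (k : ℕ)
    (i : Fin n) : g i ≤ kleene Sint f k i := by
  by_cases h : kleene Sint f k i = ⊤
  · exact h ▸ le_top
  obtain ⟨t, rfl, ht, -, hwt⟩ := exists_valid_weight_le_kleene h
  exact (le_weight_of_isFixedPt hg ht).trans hwt

lemma kleene_succ_eq_of_isFixedPt {g : Fin n → WithTop ℤ} (hg : applyPV Sint f g = g) :
    kleene Sint f (n + 1) = kleene Sint f n := by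
  funext i
  refine le_antisymm (kleene_succ_le n i) ?_
  by_cases h : kleene Sint f (n + 1) i = ⊤
  · exact h ▸ le_top
  obtain ⟨t, rfl, ht, -, hwt⟩ := exists_valid_weight_le_kleene h
  obtain ⟨u, hroot, hu, hu_ht, hu_wt⟩ :=
    exists_heightLE_weight_le_of_isFixedPt hg ht (ne_top_of_le_ne_top h hwt)
  exact (hroot ▸ kleene_le_weight hu hu_ht).trans (hu_wt.trans hwt)

end

/-- Corollary 1: over the integer min-plus semiring `S_int`, `f` has a greatest fixed
point iff `ks(n) = ks(n+1)`, and in that case `ks(n)` is the greatest fixed point. -/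
theorem sint_gfp_iff_stabilizes {n : ℕ} (f : PolyVec (WithTop ℤ) n) :
    ((∃ g : Fin n → WithTop ℤ, isGFP Sint f g) ↔ kleene Sint f n = kleene Sint f (n + 1)) ∧
    (kleene Sint f n = kleene Sint f (n + 1) → isGFP Sint f (kleene Sint f n)) := by
  have isGFP_of_stable (h : kleene Sint f n = kleene Sint f (n + 1)) :
      isGFP Sint f (kleene Sint f n) :=
    ⟨h.symm, fun v hv i => sint_le_iff.2 (le_kleene_of_isFixedPt hv n i)⟩
  exact ⟨⟨fun ⟨_, hg, _⟩ => (kleene_succ_eq_of_isFixedPt hg).symm,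
    fun h => ⟨_, isGFP_of_stable h⟩⟩, isGFP_of_stable⟩
end

section
/- Let W = (P, Γ, Δ, S) be a weighted pushdown system over an idempotent semiring S, and let W' be its reversal: W' has control states P' = P ∪ { (q, Y) : there is a rule pX —d→ qYZ in Δ }, stack alphabet Γ ∪ {#} for a fresh symbol #, and rules Δ' as follows: for each rule pX —d→ qY in Δ, the rule qY —d→ pX is in Δ'; for each rule pX —d→ qε in Δ and every Y ∈ Γ ∪ {#}, the rule qY —d→ pXY is in Δ'; and for each rule pX —d→ qYZ in Δ, the rules qY —1̄→ (q,Y)ε and (q,Y)Z —d→ pX are in Δ'. Then whenever pα ⟶_σ qβ holds in W with σ = r_1 ⋯ r_n, there exists a rule sequence τ = s_1 ⋯ s_m in W' with qβ# ⟶_τ pα# and d_{r_1} ⊗ ⋯ ⊗ d_{r_n} = d_{s_m} ⊗ ⋯ ⊗ d_{s_1}. (Weight-preserving reversal, Appendix B.) -/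
universe u v w

/-- A rule `pX —d→ qα` of a weighted pushdown system. -/
structure PDSRule (P : Type v) (Γ : Type w) (D : Type u) where
  p : P
  X : Γ
  d : D
  q : P
  α : List Γ

/-- A configuration `pγ`. -/
abbrev PDSConfig (P : Type v) (Γ : Type w) := P × List Γ

/-- One step using rule `r` : `pXγ ⟶ᵣ qαγ`. -/
def StepBy {P : Type v} {Γ : Type w} {D : Type u} (r : PDSRule P Γ D)
    (c c' : PDSConfig P Γ) : Prop :=
  ∃ γ : List Γ, c = (r.p, r.X :: γ) ∧ c' = (r.q, r.α ++ γ)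

/-- `Steps σ c c'` : the rule sequence `σ` leads from `c` to `c'`. -/
def Steps {P : Type v} {Γ : Type w} {D : Type u} :
    List (PDSRule P Γ D) → PDSConfig P Γ → PDSConfig P Γ → Prop
  | [], c, c' => c = c'
  | r :: σ, c, c' => ∃ c'', StepBy r c c'' ∧ Steps σ c'' c'

/-- The weight `v(σ) = d_{r₁} ⊗ ⋯ ⊗ d_{r_n}` of a rule sequence (with `v(ε) = 1̄`). -/
def seqWeight {P : Type v} {Γ : Type w} {D : Type u} (S : IdemSemiring' D)
    (σ : List (PDSRule P Γ D)) : D :=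
  σ.foldr (fun r acc => S.mul r.d acc) S.one

/-- The rules `Δ'` of the reversed weighted pushdown system `W'` : control states are
`P ⊕ (P × Γ)`, the stack alphabet is `Option Γ` (where `none` is the fresh symbol `#`). -/
inductive RevRule {P : Type v} {Γ : Type w} {D : Type u}
    (S : IdemSemiring' D) (Δ : List (PDSRule P Γ D)) :
    PDSRule (P ⊕ P × Γ) (Option Γ) D → Prop
  | swap (r : PDSRule P Γ D) (hr : r ∈ Δ) (Y : Γ) (h : r.α = [Y]) :
      RevRule S Δ ⟨Sum.inl r.q, some Y, r.d, Sum.inl r.p, [some r.X]⟩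
  | pop (r : PDSRule P Γ D) (hr : r ∈ Δ) (h : r.α = []) (Y : Option Γ) :
      RevRule S Δ ⟨Sum.inl r.q, Y, r.d, Sum.inl r.p, [some r.X, Y]⟩
  | push₁ (r : PDSRule P Γ D) (hr : r ∈ Δ) (Y Z : Γ) (h : r.α = [Y, Z]) :
      RevRule S Δ ⟨Sum.inl r.q, some Y, S.one, Sum.inr (r.q, Y), []⟩
  | push₂ (r : PDSRule P Γ D) (hr : r ∈ Δ) (Y Z : Γ) (h : r.α = [Y, Z]) :
      RevRule S Δ ⟨Sum.inr (r.q, Y), some Z, r.d, Sum.inl r.p, [some r.X]⟩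

theorem steps_append' {P : Type v} {Γ : Type w} {D : Type u}
    (σ τ : List (PDSRule P Γ D)) (c c' c'' : PDSConfig P Γ)
    (h1 : Steps σ c c') (h2 : Steps τ c' c'') : Steps (σ ++ τ) c c'' := by
  induction σ generalizing c with
  | nil => cases h1; exact h2
  | cons r σ ih =>
    obtain ⟨m, hs, hrest⟩ := h1
    exact ⟨m, hs, ih m hrest⟩

/-- Weight-preserving reversal (Appendix B): whenever `pα ⟶_σ qβ` holds in `W`, there
is a rule sequence `τ` of the reversed system `W'` with `qβ# ⟶_τ pα#` and
`d_{r₁} ⊗ ⋯ ⊗ d_{r_n} = d_{s_m} ⊗ ⋯ ⊗ d_{s_1}`. -/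
theorem reversal_preserves_weights {P : Type v} {Γ : Type w} {D : Type u}
    [Fintype P] [DecidableEq P] [Fintype Γ] [DecidableEq Γ]
    (S : IdemSemiring' D) (Δ : List (PDSRule P Γ D)) (hΔ : ∀ r ∈ Δ, r.α.length ≤ 2)
    (p q : P) (α β : List Γ) (σ : List (PDSRule P Γ D))
    (hmem : ∀ r ∈ σ, r ∈ Δ) (hσ : Steps σ (p, α) (q, β)) :
    ∃ τ : List (PDSRule (P ⊕ P × Γ) (Option Γ) D),
      (∀ s ∈ τ, RevRule S Δ s) ∧
      Steps τ (Sum.inl q, β.map some ++ [none]) (Sum.inl p, α.map some ++ [none]) ∧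
      seqWeight S σ = seqWeight S τ.reverse := by
  induction σ generalizing p α with
  | nil =>
    cases hσ  -- hσ : (p, α) = (q, β) gives p = q, α = β
    exact ⟨[], by simp, rfl, rfl⟩
  | cons r σ' ih =>
    obtain ⟨c'', ⟨γ, hc, hc''⟩, hrest⟩ := hσ
    obtain ⟨hp, hα⟩ := Prod.mk.injEq .. ▸ hc
    subst hc''
    have hrΔ : r ∈ Δ := hmem r (by simp)
    obtain ⟨τ, hτmem, hτsteps, hτw⟩ :=
      ih r.q (r.α ++ γ) (fun s hs => hmem s (List.mem_cons_of_mem _ hs)) hrest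
    have hlen := hΔ r hrΔ
    subst hp; subst hα
    match hA : r.α, hlen with
    | [], _ =>
      obtain ⟨Y₀, rest, hst⟩ : ∃ Y₀ rest, γ.map some ++ [none] = Y₀ :: rest := by
        cases γ <;> exact ⟨_, _, rfl⟩
      refine ⟨τ ++ [⟨Sum.inl r.q, Y₀, r.d, Sum.inl r.p, [some r.X, Y₀]⟩],
        ?_, ?_, ?_⟩
      · intro s hs
        rcases List.mem_append.mp hs with h | h
        · exact hτmem s h
        · simp at h; subst h
          exact RevRule.pop r hrΔ hA Y₀
      · refine steps_append' _ _ _ _ _ (by simpa [hA] using hτsteps) ?_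
        refine ⟨_, ⟨rest, ?_, rfl⟩, ?_⟩
        · simp [hA, hst]
        · simp [Steps, hst]
      · simp only [List.reverse_append, List.reverse_cons, List.reverse_nil,
          List.nil_append, List.singleton_append]
        show seqWeight S (r :: σ') = S.mul r.d (seqWeight S τ.reverse)
        rw [← hτw]; rfl
    | [Y], _ =>
      refine ⟨τ ++ [⟨Sum.inl r.q, some Y, r.d, Sum.inl r.p, [some r.X]⟩],
        ?_, ?_, ?_⟩
      · intro s hs
        rcases List.mem_append.mp hs with h | h
        · exact hτmem s h
        · simp at h; subst h
          exact RevRule.swap r hrΔ Y hA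
      · refine steps_append' _ _ _ _ _ (by simpa [hA] using hτsteps) ?_
        refine ⟨_, ⟨γ.map some ++ [none], ?_, rfl⟩, ?_⟩
        · simp [hA]
        · simp [Steps]
      · simp only [List.reverse_append, List.reverse_cons, List.reverse_nil,
          List.nil_append, List.singleton_append]
        show seqWeight S (r :: σ') = S.mul r.d (seqWeight S τ.reverse)
        rw [← hτw]; rfl
    | [Y, Z], _ =>
      refine ⟨τ ++ [⟨Sum.inl r.q, some Y, S.one, Sum.inr (r.q, Y), []⟩,
          ⟨Sum.inr (r.q, Y), some Z, r.d, Sum.inl r.p, [some r.X]⟩],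
        ?_, ?_, ?_⟩
      · intro s hs
        rcases List.mem_append.mp hs with h | h
        · exact hτmem s h
        · simp at h
          rcases h with h | h <;> subst h
          · exact RevRule.push₁ r hrΔ Y Z hA
          · exact RevRule.push₂ r hrΔ Y Z hA
      · refine steps_append' _ _ _ _ _ (by simpa [hA] using hτsteps) ?_
        refine ⟨_, ⟨some Z :: (γ.map some ++ [none]), ?_, rfl⟩, ?_⟩
        · simp [hA]
        · refine ⟨_, ⟨γ.map some ++ [none], rfl, rfl⟩, ?_⟩
          simp [Steps]
      · simp only [List.reverse_append, List.reverse_cons, List.reverse_nil,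
          List.nil_append]
        show seqWeight S (r :: σ') = S.mul r.d (S.mul S.one (seqWeight S τ.reverse))
        rw [S.one_mul, ← hτw]; rfl
    | _ :: _ :: _ :: _, h => simp at h
end
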